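/- For all real r ≥ 0 and ω ≥ 0 there holds |ω J₀(rω) − [(15/64·r⁴ − 3/4·r² + 1)·He₁(ω) + (5/32·r⁴ − 1/4·r²)·He₃(ω) + (1/64)·r⁴·He₅(ω)]| ≤ ω⁷ r⁶ / 720. -/

import Mathlib

open MeasureTheory

/-- Probabilists' Hermite polynomial `Heₙ(x) = (−1)ⁿ e^{x²/2} dⁿ/dxⁿ e^{−x²/2}`. -/
noncomputable def He (n : ℕ) (x : ℝ) : ℝ :=
  (-1) ^ n * Real.exp (x ^ 2 / 2) * iteratedDeriv n (fun y => Real.exp (-(y ^ 2) / 2)) x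

/-- Bessel function of the first kind of order 0: `J₀(x) = (1/π)∫₀^π cos(x sin φ) dφ`. -/
noncomputable def J0 (x : ℝ) : ℝ :=
  (1 / Real.pi) * ∫ φ in (0 : ℝ)..Real.pi, Real.cos (x * Real.sin φ)

/-! Integrating the fourth-order Taylor polynomial of `cos (x * sin φ)` over `[0, π]`, with
`∫₀^π sin² = π/2` and `∫₀^π sin⁴ = 3π/8`, gives `J₀ x ≈ 1 - x²/4 + x⁴/64` with error at most
`x⁶/720`, since `|cos t - (1 - t²/2 + t⁴/24)| ≤ t⁶/720`. That bound comes from the chain of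
alternating Taylor inequalities for `sin` and `cos` on `[0, ∞)`, each obtained from the previous
one by integrating. Since `He₁ = ω`, `He₃ = ω³ - 3ω`, `He₅ = ω⁵ - 10ω³ + 15ω`, the Hermite
combination is exactly `ω (1 - (rω)²/4 + (rω)⁴/64)`. -/

open Real Polynomial

lemma nonneg_of_deriv_nonneg {f : ℝ → ℝ} (hf : Differentiable ℝ f)
    (hf' : ∀ t, 0 ≤ t → 0 ≤ deriv f t) (h0 : f 0 = 0) {x : ℝ} (hx : 0 ≤ x) : 0 ≤ f x := by
  have hmono : MonotoneOn f (Set.Ici 0) :=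
    monotoneOn_of_deriv_nonneg (convex_Ici 0) hf.continuous.continuousOn hf.differentiableOn
      fun t ht => hf' t (interior_subset ht)
  simpa [h0] using hmono Set.self_mem_Ici hx hx

lemma cos_le_taylor_four_of_nonneg {x : ℝ} (hx : 0 ≤ x) :
    cos x ≤ 1 - x ^ 2 / 2 + x ^ 4 / 24 := by
  have := nonneg_of_deriv_nonneg (f := fun t => 1 - t ^ 2 / 2 + t ^ 4 / 24 - cos t)
    (by fun_prop) (fun t ht => by
      simp (disch := fun_prop) only [deriv_fun_sub, deriv_fun_add, deriv_const', deriv_div_const,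
        deriv_fun_pow, Nat.cast_ofNat, Nat.add_one_sub_one, pow_one, deriv_id'', mul_one, zero_sub,
        deriv_cos', sub_neg_eq_add]
      nlinarith [sin_ge_sub_cube ht])
    (by simp) hx
  linarith

lemma sin_le_taylor_five_of_nonneg {x : ℝ} (hx : 0 ≤ x) :
    sin x ≤ x - x ^ 3 / 6 + x ^ 5 / 120 := by
  have := nonneg_of_deriv_nonneg (f := fun t => t - t ^ 3 / 6 + t ^ 5 / 120 - sin t)
    (by fun_prop) (fun t ht => by
      simp (disch := fun_prop) only [deriv_fun_sub, deriv_fun_add, deriv_id'', deriv_div_const,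
        deriv_fun_pow, Nat.cast_ofNat, Nat.add_one_sub_one, mul_one, Real.deriv_sin, sub_nonneg]
      nlinarith [cos_le_taylor_four_of_nonneg ht])
    (by simp) hx
  linarith

lemma taylor_six_le_cos_of_nonneg {x : ℝ} (hx : 0 ≤ x) :
    1 - x ^ 2 / 2 + x ^ 4 / 24 - x ^ 6 / 720 ≤ cos x := by
  have := nonneg_of_deriv_nonneg (f := fun t => cos t - (1 - t ^ 2 / 2 + t ^ 4 / 24 - t ^ 6 / 720))
    (by fun_prop) (fun t ht => by
      simp (disch := fun_prop) only [deriv_fun_sub, deriv_cos', deriv_fun_add, deriv_const',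
        deriv_div_const, deriv_fun_pow, Nat.cast_ofNat, Nat.add_one_sub_one, pow_one, deriv_id'',
        mul_one, zero_sub, sub_nonneg, tsub_le_iff_right, le_neg_add_iff_add_le]
      nlinarith [sin_le_taylor_five_of_nonneg ht])
    (by simp) hx
  linarith

lemma abs_cos_sub_taylor_four_le (x : ℝ) :
    |cos x - (1 - x ^ 2 / 2 + x ^ 4 / 24)| ≤ x ^ 6 / 720 := by
  wlog hx : 0 ≤ x
  · simpa [Even.neg_pow (by decide : Even 2), Even.neg_pow (by decide : Even 4),
      Even.neg_pow (by decide : Even 6)] using this (-x) (by linarith)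
  rw [abs_le]
  constructor
  · linarith [taylor_six_le_cos_of_nonneg hx]
  · linarith [cos_le_taylor_four_of_nonneg hx, pow_nonneg hx 6]

lemma He_eq_aeval_hermite (n : ℕ) (x : ℝ) : He n x = aeval x (hermite n) := by
  simp only [He, hermite_eq_deriv_gaussian', iteratedDeriv_eq_iterate, neg_div]
  ring

lemma He_one (x : ℝ) : He 1 x = x := by
  simp [He_eq_aeval_hermite]

lemma He_three (x : ℝ) : He 3 x = x ^ 3 - 3 * x := by
  simp only [He_eq_aeval_hermite, hermite_succ, hermite_zero, mul_one,
    derivative_one, sub_zero, derivative_X, derivative_sub, derivative_mul, one_mul, aeval_sub,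
    map_mul, aeval_X, map_one, map_add]
  ring

lemma He_five (x : ℝ) : He 5 x = x ^ 5 - 10 * x ^ 3 + 15 * x := by
  simp only [He_eq_aeval_hermite, hermite_succ, hermite_zero, mul_one,
    derivative_one, sub_zero, derivative_X, derivative_sub, derivative_mul, one_mul,
    add_zero, aeval_sub, map_mul, aeval_X, map_one, map_add]
  ring

lemma integral_sin_sq_zero_pi : ∫ φ in (0 : ℝ)..π, sin φ ^ 2 = π / 2 := by
  simp [integral_sin_sq]

lemma integral_sin_pow_four_zero_pi : ∫ φ in (0 : ℝ)..π, sin φ ^ 4 = 3 * π / 8 := by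
  rw [integral_sin_pow_even (n := 2)]
  simp only [Finset.prod_range_succ, Finset.prod_range_zero]
  ring

lemma integral_cos_taylor_four_mul_sin (x : ℝ) :
    ∫ φ in (0 : ℝ)..π, (1 - (x * sin φ) ^ 2 / 2 + (x * sin φ) ^ 4 / 24) =
      π * (1 - x ^ 2 / 4 + x ^ 4 / 64) := by
  simp only [mul_pow, mul_div_right_comm _ (sin _ ^ _)]
  rw [intervalIntegral.integral_add, intervalIntegral.integral_sub,
    intervalIntegral.integral_const, intervalIntegral.integral_const_mul,
    intervalIntegral.integral_const_mul, integral_sin_sq_zero_pi, integral_sin_pow_four_zero_pi]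
  · simp only [smul_eq_mul]; ring
  all_goals apply Continuous.intervalIntegrable; fun_prop

lemma abs_J0_sub_taylor_four_le (x : ℝ) :
    |J0 x - (1 - x ^ 2 / 4 + x ^ 4 / 64)| ≤ x ^ 6 / 720 := by
  have hsin (φ : ℝ) : (x * sin φ) ^ 6 ≤ x ^ 6 := by
    have : sin φ ^ 6 ≤ 1 := by
      simpa [(by decide : Even 6).pow_abs] using
        pow_le_one₀ (n := 6) (abs_nonneg _) (abs_sin_le_one φ)
    rw [mul_pow]
    exact mul_le_of_le_one_right (by positivity) this
  have hrem : ‖∫ φ in (0 : ℝ)..π,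
      (cos (x * sin φ) - (1 - (x * sin φ) ^ 2 / 2 + (x * sin φ) ^ 4 / 24))‖ ≤
      x ^ 6 / 720 * |π - 0| :=
    intervalIntegral.norm_integral_le_of_norm_le_const fun φ _ =>
      (abs_cos_sub_taylor_four_le _).trans (by linarith [hsin φ])
  rw [intervalIntegral.integral_sub (by apply Continuous.intervalIntegrable; fun_prop)
    (by apply Continuous.intervalIntegrable; fun_prop), integral_cos_taylor_four_mul_sin,
    sub_zero, abs_of_pos pi_pos, Real.norm_eq_abs] at hrem
  have hJ0 : J0 x - (1 - x ^ 2 / 4 + x ^ 4 / 64) =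
      ((∫ φ in (0 : ℝ)..π, cos (x * sin φ)) - π * (1 - x ^ 2 / 4 + x ^ 4 / 64)) / π := by
    rw [J0]
    field_simp
  rwa [hJ0, abs_div, abs_of_pos pi_pos, div_le_iff₀ pi_pos]

theorem stmt_5_general (r ω : ℝ) (hω : 0 ≤ ω) :
    |ω * J0 (r * ω) -
        ((15 / 64 * r ^ 4 - 3 / 4 * r ^ 2 + 1) * He 1 ω +
          (5 / 32 * r ^ 4 - 1 / 4 * r ^ 2) * He 3 ω +
          1 / 64 * r ^ 4 * He 5 ω)| ≤ ω ^ 7 * r ^ 6 / 720 := by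
  have hexpand : (15 / 64 * r ^ 4 - 3 / 4 * r ^ 2 + 1) * He 1 ω +
      (5 / 32 * r ^ 4 - 1 / 4 * r ^ 2) * He 3 ω + 1 / 64 * r ^ 4 * He 5 ω =
      ω * (1 - (r * ω) ^ 2 / 4 + (r * ω) ^ 4 / 64) := by
    rw [He_one, He_three, He_five]; ring
  rw [hexpand, ← mul_sub, abs_mul, abs_of_nonneg hω]
  calc ω * |J0 (r * ω) - (1 - (r * ω) ^ 2 / 4 + (r * ω) ^ 4 / 64)|
      ≤ ω * ((r * ω) ^ 6 / 720) := by gcongr; exact abs_J0_sub_taylor_four_le _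
    _ = ω ^ 7 * r ^ 6 / 720 := by ring

theorem stmt_5 (r ω : ℝ) (hr : 0 ≤ r) (hω : 0 ≤ ω) :
    |ω * J0 (r * ω) -
        ((15 / 64 * r ^ 4 - 3 / 4 * r ^ 2 + 1) * He 1 ω +
          (5 / 32 * r ^ 4 - 1 / 4 * r ^ 2) * He 3 ω +
          1 / 64 * r ^ 4 * He 5 ω)| ≤ ω ^ 7 * r ^ 6 / 720 :=
  stmt_5_general r ω hω
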